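/- arXiv:1902.08923 — 2 statements merged into one kernel-verified Lean document; each statement's English description precedes it below -/
import Mathlib

section
/- If P is a prime ideal in B₁(X), then Z_B[P] = {Z(f) : f ∈ P} is a prime Z_B-filter on X, i.e., whenever Z₁, Z₂ are zero sets of Baire one functions with Z₁ ∪ Z₂ ∈ Z_B[P], either Z₁ ∈ Z_B[P] or Z₂ ∈ Z_B[P]. -/
open Filter Topology

/-- A function `f : X → ℝ` is Baire one if it is a pointwise limit of a
sequence of continuous functions. -/
def IsBaireOne {X : Type*} [TopologicalSpace X] (f : X → ℝ) : Prop :=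
  ∃ F : ℕ → C(X, ℝ), ∀ x, Tendsto (fun n => F n x) atTop (𝓝 (f x))

/-- The ring `B₁(X)` of real valued Baire one functions on `X`, as a subring
of the ring of all functions `X → ℝ`. -/
def B1 (X : Type*) [TopologicalSpace X] : Subring (X → ℝ) where
  carrier := {f | IsBaireOne f}
  zero_mem' := ⟨fun _ => 0, fun x => by simpa using tendsto_const_nhds⟩
  one_mem' := ⟨fun _ => 1, fun x => by simpa using tendsto_const_nhds⟩
  add_mem' := by
    rintro f g ⟨F, hF⟩ ⟨G, hG⟩
    exact ⟨fun n => F n + G n, fun x => by simpa using (hF x).add (hG x)⟩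
  mul_mem' := by
    rintro f g ⟨F, hF⟩ ⟨G, hG⟩
    exact ⟨fun n => F n * G n, fun x => by simpa using (hF x).mul (hG x)⟩
  neg_mem' := by
    rintro f ⟨F, hF⟩
    exact ⟨fun n => -F n, fun x => by simpa using (hF x).neg⟩

variable {X : Type*} [TopologicalSpace X]

/-- The constant function with value `r`, as an element of `B₁(X)`. -/
def bconst (X : Type*) [TopologicalSpace X] (r : ℝ) : B1 X :=
  ⟨fun _ => r, ⟨fun _ => ContinuousMap.const X r, fun x => by simpa using tendsto_const_nhds⟩⟩

theorem babs_mem (f : B1 X) : (fun x => |(f : X → ℝ) x|) ∈ B1 X := by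
  obtain ⟨F, hF⟩ := f.2
  exact ⟨fun n => ⟨fun x => |F n x|, (F n).continuous.abs⟩, fun x => (hF x).abs⟩

/-- The absolute value `|f|` of a Baire one function. -/
def babs (f : B1 X) : B1 X := ⟨fun x => |(f : X → ℝ) x|, babs_mem f⟩

/-- The zero set `Z(f)` of `f ∈ B₁(X)`. -/
def zset (f : B1 X) : Set X := {x | (f : X → ℝ) x = 0}

/-- `Z(B₁(X))`, the family of all zero sets of Baire one functions on `X`. -/
def zsets (X : Type*) [TopologicalSpace X] : Set (Set X) := {Z | ∃ f : B1 X, zset f = Z}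

/-- `Z_B[I] = {Z(f) : f ∈ I}` for an ideal `I` of `B₁(X)`. -/
def zbi (I : Ideal (B1 X)) : Set (Set X) := {Z | ∃ f ∈ I, zset f = Z}

/-- A `Z_B`-filter on `X`: a nonempty family of zero sets of Baire one functions,
not containing `∅`, closed under finite intersections and upward closed in `Z(B₁(X))`. -/
def IsZBFilter (F : Set (Set X)) : Prop :=
  F.Nonempty ∧ F ⊆ zsets X ∧ ∅ ∉ F ∧
    (∀ Z₁ ∈ F, ∀ Z₂ ∈ F, Z₁ ∩ Z₂ ∈ F) ∧
    (∀ Z ∈ F, ∀ Z' ∈ zsets X, Z ⊆ Z' → Z' ∈ F)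

/-- A `Z_B`-ultrafilter on `X`: a maximal `Z_B`-filter. -/
def IsZBUltrafilter (U : Set (Set X)) : Prop :=
  IsZBFilter U ∧ ∀ F : Set (Set X), IsZBFilter F → U ⊆ F → F = U

/-- The finite intersection property: every nonempty finite subfamily has
nonempty intersection. -/
def FIP {X : Type*} (B : Set (Set X)) : Prop :=
  ∀ S : Finset (Set X), ↑S ⊆ B → S.Nonempty → (⋂₀ (S : Set (Set X))).Nonempty

/-- An ideal `I` of `B₁(X)` is a `Z_B`-ideal if `Z_B⁻¹[Z_B[I]] = I`. -/
def IsZBIdeal (I : Ideal (B1 X)) : Prop :=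
  ∀ f : B1 X, zset f ∈ zbi I → f ∈ I

/-- An ideal of `B₁(X)` is fixed if the zero sets of its members have a common point. -/
def FixedIdeal (I : Ideal (B1 X)) : Prop :=
  (⋂ f ∈ (I : Set (B1 X)), zset f).Nonempty

/-- A prime `Z_B`-filter. -/
def IsPrimeZBFilter (F : Set (Set X)) : Prop :=
  IsZBFilter F ∧ ∀ Z₁ ∈ zsets X, ∀ Z₂ ∈ zsets X, Z₁ ∪ Z₂ ∈ F → Z₁ ∈ F ∨ Z₂ ∈ F

/-- `M(f) ≥ 0` in the quotient `B₁(X)/M`: the coset contains a nonnegative function. -/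
def QNonneg (M : Ideal (B1 X)) (a : B1 X ⧸ M) : Prop :=
  ∃ g : B1 X, (∀ x, 0 ≤ (g : X → ℝ) x) ∧ Ideal.Quotient.mk M g = a

/-- `M(f) > 0` in the quotient `B₁(X)/M`. -/
def QPos (M : Ideal (B1 X)) (a : B1 X ⧸ M) : Prop := QNonneg M a ∧ a ≠ 0

/-- A maximal ideal `M` of `B₁(X)` is real if the canonical copy of `ℝ`
(via constant functions) is all of `B₁(X)/M`. -/
def RealIdeal (M : Ideal (B1 X)) : Prop :=
  Function.Surjective (fun r : ℝ => Ideal.Quotient.mk M (bconst X r))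

/-- An `F_σ` subset: a countable union of closed sets. -/
def IsFSigma {X : Type*} [TopologicalSpace X] (s : Set X) : Prop :=
  ∃ F : ℕ → Set X, (∀ n, IsClosed (F n)) ∧ s = ⋃ n, F n
lemma my_coe_mul (f g : B1 X) (x : X) :
    ((f * g : B1 X) : X → ℝ) x = (f : X → ℝ) x * (g : X → ℝ) x := rfl

lemma my_coe_add (f g : B1 X) (x : X) :
    ((f + g : B1 X) : X → ℝ) x = (f : X → ℝ) x + (g : X → ℝ) x := rfl

lemma my_zset_mul (f g : B1 X) : zset (f * g) = zset f ∪ zset g := by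
  ext x
  simp only [zset, Set.mem_setOf_eq, Set.mem_union, my_coe_mul, mul_eq_zero]

lemma my_zset_add_sq (f g : B1 X) : zset (f * f + g * g) = zset f ∩ zset g := by
  ext x
  simp only [zset, Set.mem_setOf_eq, Set.mem_inter_iff, my_coe_add, my_coe_mul]
  constructor
  · intro h
    constructor <;> nlinarith [mul_self_nonneg ((f : X → ℝ) x), mul_self_nonneg ((g : X → ℝ) x)]
  · rintro ⟨h1, h2⟩; rw [h1, h2]; ring

/-- If a Baire one function has empty zero set, its reciprocal is Baire one. -/
lemma my_inv_mem (f : B1 X) (hf : ∀ x, (f : X → ℝ) x ≠ 0) :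
    (fun x => ((f : X → ℝ) x)⁻¹) ∈ B1 X := by
  obtain ⟨F, hF⟩ := f.2
  refine ⟨fun n => ⟨fun x => F n x / (F n x * F n x + 1 / (n + 1)), ?_⟩, ?_⟩
  · refine (F n).continuous.div (by continuity) fun x => ?_
    have h1 : (0:ℝ) < 1 / (n + 1) := by positivity
    nlinarith [mul_self_nonneg (F n x)]
  · intro x
    have hd : Tendsto (fun n => F n x * F n x + 1 / ((n : ℝ) + 1)) atTop
        (𝓝 ((f : X → ℝ) x * (f : X → ℝ) x + 0)) :=
      ((hF x).mul (hF x)).add tendsto_one_div_add_atTop_nhds_zero_nat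
    have hne : (f : X → ℝ) x * (f : X → ℝ) x + 0 ≠ 0 := by
      have := hf x; intro h; apply this; nlinarith
    have := (hF x).div hd hne
    have heq : (f : X → ℝ) x / ((f : X → ℝ) x * (f : X → ℝ) x + 0) = ((f : X → ℝ) x)⁻¹ := by
      rw [add_zero]; field_simp
    rwa [heq] at this

lemma my_pos_mem (f : B1 X) : (fun x => max ((f : X → ℝ) x) 0) ∈ B1 X := by
  obtain ⟨F, hF⟩ := f.2
  exact ⟨fun n => ⟨fun x => max (F n x) 0, (F n).continuous.max continuous_const⟩,
    fun x => (hF x).max tendsto_const_nhds⟩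

/-- The positive part of a Baire one function. -/
def bpos (f : B1 X) : B1 X := ⟨fun x => max ((f : X → ℝ) x) 0, my_pos_mem f⟩

lemma my_key {X : Type*} [TopologicalSpace X] (P : Ideal (B1 X))
    (f g h : B1 X) (hf : f ∈ P) (hz : zset f = zset g ∪ zset h)
    (hk : bpos (babs g - babs h) ∈ P) : zset g ∈ zbi P := by
  set k := bpos (babs g - babs h) with hkdef
  refine ⟨g * (f * f + k * k), P.mul_mem_left g (P.add_mem (P.mul_mem_left f hf)
    (P.mul_mem_left k hk)), ?_⟩
  rw [my_zset_mul, my_zset_add_sq, hz]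
  ext x
  simp only [Set.mem_union, Set.mem_inter_iff, zset, Set.mem_setOf_eq]
  constructor
  · rintro (hg | ⟨(hg | hh), hkx⟩)
    · exact hg
    · exact hg
    · -- k x = 0 means |g x| ≤ |h x|, and h x = 0
      have : max (|(g : X → ℝ) x| - |(h : X → ℝ) x|) 0 = 0 := hkx
      have hle : |(g : X → ℝ) x| - |(h : X → ℝ) x| ≤ 0 := by
        by_contra hc; push_neg at hc
        rw [max_eq_left hc.le] at this; linarith
      rw [hh] at hle
      simp only [abs_zero, sub_zero] at hle
      exact abs_eq_zero.mp (le_antisymm hle (abs_nonneg _))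
  · intro hg; exact Or.inl hg

/-- If `P` is a prime ideal of `B₁(X)` then `Z_B[P]` is a prime `Z_B`-filter. -/
theorem zbi_isPrimeZBFilter {X : Type*} [TopologicalSpace X]
    (P : Ideal (B1 X)) (hP : P.IsPrime) : IsPrimeZBFilter (zbi P) := by
  constructor
  · refine ⟨⟨Set.univ, 0, P.zero_mem, ?_⟩, ?_, ?_, ?_, ?_⟩
    · ext x; simp [zset]
    · rintro Z ⟨f, _, hfz⟩; exact ⟨f, hfz⟩
    · rintro ⟨f, hfP, hfz⟩
      have hne : ∀ x, (f : X → ℝ) x ≠ 0 := by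
        intro x hx
        have : x ∈ zset f := hx
        rw [hfz] at this; exact this
      have h1 : (1 : B1 X) ∈ P := by
        have : (⟨_, my_inv_mem f hne⟩ : B1 X) * f = 1 := by
          apply Subtype.ext; funext x
          exact inv_mul_cancel₀ (hne x)
        rw [← this]
        exact P.mul_mem_left _ hfP
      exact hP.ne_top ((Ideal.eq_top_iff_one P).mpr h1)
    · rintro Z₁ ⟨f, hfP, hfz⟩ Z₂ ⟨g, hgP, hgz⟩
      exact ⟨f * f + g * g, P.add_mem (P.mul_mem_left f hfP) (P.mul_mem_left g hgP),
        by rw [my_zset_add_sq, hfz, hgz]⟩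
    · rintro Z ⟨f, hfP, hfz⟩ Z' ⟨g, hgz⟩ hsub
      refine ⟨g * f, P.mul_mem_left g hfP, ?_⟩
      rw [my_zset_mul, hgz, hfz]
      exact Set.union_eq_self_of_subset_right hsub
  · rintro Z₁ ⟨g, hgz⟩ Z₂ ⟨h, hhz⟩ ⟨f, hfP, hfz⟩
    have hzf : zset f = zset g ∪ zset h := by rw [hfz, hgz, hhz]
    have hprod : bpos (babs g - babs h) * bpos (babs h - babs g) = 0 := by
      apply Subtype.ext; funext x
      have : max (|(g : X → ℝ) x| - |(h : X → ℝ) x|) 0 *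
          max (|(h : X → ℝ) x| - |(g : X → ℝ) x|) 0 = 0 := by
        rcases le_total (|(g : X → ℝ) x|) (|(h : X → ℝ) x|) with hle | hle
        · have h1 : max (|(g : X → ℝ) x| - |(h : X → ℝ) x|) 0 = 0 := max_eq_right (by linarith)
          rw [h1, zero_mul]
        · have h2 : max (|(h : X → ℝ) x| - |(g : X → ℝ) x|) 0 = 0 := max_eq_right (by linarith)
          rw [h2, mul_zero]
      exact this
    have hmem : bpos (babs g - babs h) * bpos (babs h - babs g) ∈ P := by
      rw [hprod]; exact P.zero_mem
    rcases hP.mem_or_mem hmem with hk | hk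
    · left; rw [← hgz]; exact my_key P f g h hfP hzf hk
    · right; rw [← hhz]
      exact my_key P f h g hfP (by rw [hzf, Set.union_comm]) hk
end

section
/- Let M be a maximal ideal in B₁(X) and f ∈ B₁(X). Then M(f) > 0 in the lattice-ordered quotient field B₁(X)/M if and only if there exists Z ∈ Z_B[M] such that f(x) > 0 for all x ∈ Z. -/
open Filter Topology

variable {X : Type*} [TopologicalSpace X]

/-!
A Baire one function without zeros has a Baire one reciprocal, so every member of `Z_B[I]` is
nonempty for a proper ideal `I`; and since `Z(a² + b²) = Z(a) ∩ Z(b)`, `Z_B[I]` is closed under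
finite intersections. If `M` is maximal and `f ∉ M`, some `u` has `uf - 1 ∈ M`, and `f` has no
zero on `Z(uf - 1)`; it follows that `M` contains every `k` vanishing on some member of `Z_B[M]`.

If `M(f) = M(g) > 0` with `g ≥ 0`, then `f = g ≠ 0` on `Z(g - f) ∩ Z(uf - 1) ∈ Z_B[M]`.
Conversely, if `f > 0` on `Z(m)` with `m ∈ M`, then `|f| - f` vanishes there, so `M(f) = M(|f|)`,
and `f ∉ M` because `Z(m) ∩ Z(f) = ∅`.
-/

theorem IsBaireOne.inv {h : X → ℝ} (hh : IsBaireOne h) (hne : ∀ x, h x ≠ 0) :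
    IsBaireOne h⁻¹ := by
  obtain ⟨F, hF⟩ := hh
  -- `t ↦ t / (t² + ε)` is continuous for `ε > 0` and tends to `t⁻¹` as `ε → 0` when `t ≠ 0`.
  refine ⟨fun n => ⟨fun x => F n x / (F n x ^ 2 + ((n : ℝ) + 1)⁻¹),
    (F n).continuous.div (((F n).continuous.pow 2).add continuous_const)
      fun x => (add_pos_of_nonneg_of_pos (sq_nonneg _) Nat.inv_pos_of_nat).ne'⟩, fun x => ?_⟩
  have hε : Tendsto (fun n : ℕ => ((n : ℝ) + 1)⁻¹) atTop (𝓝 0) := by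
    simpa [one_div] using tendsto_one_div_add_atTop_nhds_zero_nat (𝕜 := ℝ)
  have hlim := (hF x).div (((hF x).pow 2).add hε) (by simpa using pow_ne_zero 2 (hne x))
  rwa [add_zero, sq, div_self_mul_self'] at hlim

theorem isUnit_of_zset_eq_empty {w : B1 X} (hw : zset w = ∅) : IsUnit w := by
  have hne : ∀ x, (w : X → ℝ) x ≠ 0 := fun x => Set.eq_empty_iff_forall_notMem.mp hw x
  exact IsUnit.of_mul_eq_one (⟨(w : X → ℝ)⁻¹, IsBaireOne.inv w.2 hne⟩ : B1 X)
    (Subtype.ext (funext fun x => mul_inv_cancel₀ (hne x)))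

theorem zset_mul_self_add_mul_self (a b : B1 X) :
    zset (a * a + b * b) = zset a ∩ zset b := by
  ext x
  exact mul_self_add_mul_self_eq_zero

theorem nonempty_of_mem_zbi {I : Ideal (B1 X)} (hI : I ≠ ⊤) {Z : Set X} (hZ : Z ∈ zbi I) :
    Z.Nonempty := by
  obtain ⟨m, hm, rfl⟩ := hZ
  by_contra hempty
  exact hI (I.eq_top_of_isUnit_mem hm
    (isUnit_of_zset_eq_empty (Set.not_nonempty_iff_eq_empty.mp hempty)))

theorem zset_inter_zset_mem_zbi {I : Ideal (B1 X)} {a b : B1 X} (ha : a ∈ I) (hb : b ∈ I) :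
    zset a ∩ zset b ∈ zbi I :=
  ⟨a * a + b * b, I.add_mem (I.mul_mem_left a ha) (I.mul_mem_left b hb),
    zset_mul_self_add_mul_self a b⟩

theorem exists_zset_subset_support_of_notMem {M : Ideal (B1 X)} (hM : M.IsMaximal) {f : B1 X}
    (hf : f ∉ M) : ∃ m ∈ M, zset m ⊆ Function.support (f : X → ℝ) := by
  obtain ⟨v, hv⟩ := Ideal.Quotient.exists_inv (I := M) (mt Ideal.Quotient.eq_zero_iff_mem.mp hf)
  obtain ⟨u, rfl⟩ := Ideal.Quotient.mk_surjective v
  refine ⟨u * f - 1, Ideal.Quotient.eq.mp (by rw [map_mul, map_one, mul_comm, hv]),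
    fun x hx hfx => ?_⟩
  change (u : X → ℝ) x * (f : X → ℝ) x - 1 = 0 at hx
  rw [hfx] at hx
  norm_num at hx

theorem mem_of_zset_subset {M : Ideal (B1 X)} (hM : M.IsMaximal) {m k : B1 X} (hm : m ∈ M)
    (hsub : zset m ⊆ zset k) : k ∈ M := by
  by_contra hk
  obtain ⟨m', hm', hsupp⟩ := exists_zset_subset_support_of_notMem hM hk
  obtain ⟨x, hx, hx'⟩ := nonempty_of_mem_zbi hM.ne_top (zset_inter_zset_mem_zbi hm hm')
  exact hsupp hx' (hsub hx)

/-- For a maximal ideal `M` of `B₁(X)` and `f ∈ B₁(X)`: `M(f) > 0` in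
`B₁(X)/M` iff `f` is strictly positive on some member of `Z_B[M]`. -/
theorem qpos_iff_pos_on_zset {X : Type*} [TopologicalSpace X]
    (M : Ideal (B1 X)) (hM : M.IsMaximal) (f : B1 X) :
    QPos M (Ideal.Quotient.mk M f) ↔
      ∃ Z ∈ zbi M, ∀ x ∈ Z, 0 < (f : X → ℝ) x := by
  constructor
  · rintro ⟨⟨g, hg, hgf⟩, hne⟩
    obtain ⟨m, hmM, hsupp⟩ :=
      exists_zset_subset_support_of_notMem hM (mt Ideal.Quotient.eq_zero_iff_mem.mpr hne)
    refine ⟨_, zset_inter_zset_mem_zbi (Ideal.Quotient.eq.mp hgf) hmM, fun x ⟨hgfx, hmx⟩ => ?_⟩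
    have hfg : (g : X → ℝ) x = (f : X → ℝ) x := sub_eq_zero.mp hgfx
    exact ((hg x).trans_eq hfg).lt_of_ne (hsupp hmx).symm
  · rintro ⟨_, ⟨m, hmM, rfl⟩, hpos⟩
    refine ⟨⟨babs f, fun x => abs_nonneg _, Ideal.Quotient.eq.mpr
      (mem_of_zset_subset hM hmM fun x hx => sub_eq_zero.mpr (abs_of_pos (hpos x hx)))⟩,
      fun hf0 => ?_⟩
    obtain ⟨x, hxm, hxf⟩ := nonempty_of_mem_zbi hM.ne_top
      (zset_inter_zset_mem_zbi hmM (Ideal.Quotient.eq_zero_iff_mem.mp hf0))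
    exact (hpos x hxm).ne' hxf
end
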